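/- arXiv:2306.04647 — 3 statements merged into one kernel-verified Lean document; each statement's English description precedes it below -/
import Mathlib

section
/- Let Ω be the set of optimal solutions to the problem of minimizing ‖x‖₀ over the feasible set X = {x ∈ ℝⁿ : ‖Ax − b‖₂² ≤ ε}, assumed nonempty. Let x̃ ∈ Ω be an element minimizing ‖x‖₂² over Ω, and set γ₀ = ‖x̃‖₂². Then for every γ ≥ γ₀, x̃ is an optimal solution of the regularized problem: for all x ∈ X, ‖x̃‖₀ + (1/γ)‖x̃‖₂² ≤ ‖x‖₀ + (1/γ)‖x‖₂². -/
open Finset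

/-- If x̃ is a minimum ℓ₂-norm element of the set Ω of ℓ₀-minimizers over
X = {x : ‖Ax − b‖₂² ≤ ε}, and γ ≥ γ₀ = ‖x̃‖₂², then x̃ is optimal for the regularized
problem min ‖x‖₀ + (1/γ)‖x‖₂² over X. -/
theorem stmt_0 (m n : ℕ) (A : Matrix (Fin m) (Fin n) ℝ) (b : Fin m → ℝ) (ε : ℝ)
    (hε : 0 < ε)
    (X : Set (Fin n → ℝ))
    (hX : X = {x : Fin n → ℝ | ∑ j, (A.mulVec x j - b j) ^ 2 ≤ ε})
    (xt : Fin n → ℝ)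
    (hxtX : xt ∈ X)
    -- x̃ ∈ Ω : x̃ minimizes the ℓ₀ norm over X
    (hxtΩ : ∀ x ∈ X, (Finset.univ.filter (fun i => xt i ≠ 0)).card ≤
      (Finset.univ.filter (fun i => x i ≠ 0)).card)
    -- x̃ minimizes the ℓ₂ norm over Ω
    (hxtmin : ∀ x ∈ X,
      (Finset.univ.filter (fun i => x i ≠ 0)).card =
        (Finset.univ.filter (fun i => xt i ≠ 0)).card →
      ∑ i, (xt i) ^ 2 ≤ ∑ i, (x i) ^ 2)
    (γ : ℝ) (hγpos : 0 < γ) (hγ : ∑ i, (xt i) ^ 2 ≤ γ) :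
    ∀ x ∈ X,
      ((Finset.univ.filter (fun i => xt i ≠ 0)).card : ℝ) + (1 / γ) * ∑ i, (xt i) ^ 2 ≤
      ((Finset.univ.filter (fun i => x i ≠ 0)).card : ℝ) + (1 / γ) * ∑ i, (x i) ^ 2 := by
  intro x hx
  have hk := hxtΩ x hx
  rcases eq_or_lt_of_le hk with heq | hlt
  · have h2 := hxtmin x hx heq.symm
    have : (1/γ) * ∑ i, (xt i)^2 ≤ (1/γ) * ∑ i, (x i)^2 :=
      mul_le_mul_of_nonneg_left h2 (by positivity)
    rw [heq]; linarith
  · have h1 : (1/γ) * ∑ i, (xt i)^2 ≤ 1 := by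
      rw [div_mul_eq_mul_div, one_mul, div_le_one hγpos]; exact hγ
    have h2 : (0:ℝ) ≤ (1/γ) * ∑ i, (x i)^2 := by positivity
    have h3 : ((Finset.univ.filter (fun i => xt i ≠ 0)).card : ℝ) + 1 ≤
        ((Finset.univ.filter (fun i => x i ≠ 0)).card : ℝ) := by
      exact_mod_cast Nat.succ_le_of_lt hlt
    linarith
end

section
/- Let X = {x ∈ ℝⁿ : ‖Ax − b‖₂² ≤ ε} be nonempty, x̃ a minimum-ℓ₂-norm element of the set of ℓ₀-minimizers over X, and γ > 0. If x̄ minimizes ‖x‖₀ + (1/γ)‖x‖₂² over X, then ‖x̃‖₀ ≤ ‖x̄‖₀ ≤ ‖x̃‖₀ + (1/γ)(‖x̃‖₂² − min_{x ∈ X} ‖x‖₂²). -/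
open Finset

/-- Sandwich bound on the sparsity of a minimizer x̄ of the regularized
problem: ‖x̃‖₀ ≤ ‖x̄‖₀ ≤ ‖x̃‖₀ + (1/γ)(‖x̃‖₂² − min_{x ∈ X} ‖x‖₂²). -/
theorem stmt_1 (m n : ℕ) (A : Matrix (Fin m) (Fin n) ℝ) (b : Fin m → ℝ) (ε : ℝ)
    (hε : 0 < ε)
    (X : Set (Fin n → ℝ))
    (hX : X = {x : Fin n → ℝ | ∑ j, (A.mulVec x j - b j) ^ 2 ≤ ε})
    (xt : Fin n → ℝ)
    (hxtX : xt ∈ X)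
    -- x̃ minimizes the ℓ₀ norm over X
    (hxtΩ : ∀ x ∈ X, (Finset.univ.filter (fun i => xt i ≠ 0)).card ≤
      (Finset.univ.filter (fun i => x i ≠ 0)).card)
    -- x̃ minimizes the ℓ₂ norm among ℓ₀-minimizers
    (hxtmin : ∀ x ∈ X,
      (Finset.univ.filter (fun i => x i ≠ 0)).card =
        (Finset.univ.filter (fun i => xt i ≠ 0)).card →
      ∑ i, (xt i) ^ 2 ≤ ∑ i, (x i) ^ 2)
    -- xmin attains min_{x ∈ X} ‖x‖₂²
    (xmin : Fin n → ℝ) (hxminX : xmin ∈ X)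
    (hxmin : ∀ x ∈ X, ∑ i, (xmin i) ^ 2 ≤ ∑ i, (x i) ^ 2)
    (γ : ℝ) (hγpos : 0 < γ)
    -- x̄ minimizes ‖x‖₀ + (1/γ)‖x‖₂² over X
    (xb : Fin n → ℝ) (hxbX : xb ∈ X)
    (hxbopt : ∀ x ∈ X,
      ((Finset.univ.filter (fun i => xb i ≠ 0)).card : ℝ) + (1 / γ) * ∑ i, (xb i) ^ 2 ≤
      ((Finset.univ.filter (fun i => x i ≠ 0)).card : ℝ) + (1 / γ) * ∑ i, (x i) ^ 2) :
    ((Finset.univ.filter (fun i => xt i ≠ 0)).card : ℝ) ≤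
      ((Finset.univ.filter (fun i => xb i ≠ 0)).card : ℝ) ∧
    ((Finset.univ.filter (fun i => xb i ≠ 0)).card : ℝ) ≤
      ((Finset.univ.filter (fun i => xt i ≠ 0)).card : ℝ) +
        (1 / γ) * (∑ i, (xt i) ^ 2 - ∑ i, (xmin i) ^ 2) := by
  constructor
  · exact_mod_cast hxtΩ xb hxbX
  · have h1 := hxbopt xt hxtX
    have h2 := hxmin xb hxbX
    have h3 : 0 < 1/γ := by positivity
    nlinarith [mul_le_mul_of_nonneg_left h2 h3.le]
end

section
/- For any feasible x̄ of the problem min ‖x‖₀ + (1/γ)‖Wx‖₂² subject to ‖Ax − b‖₂² ≤ ε, setting z̄ᵢ = 1 if x̄ᵢ ≠ 0 and 0 otherwise, and θ̄ᵢ = x̄ᵢ², yields a feasible solution (x̄, z̄, θ̄) of the mixed-integer second-order-cone problem min Σᵢ zᵢ + (1/γ) Σᵢ wᵢ²θᵢ subject to ‖Ax − b‖₂² ≤ ε, xᵢ² ≤ zᵢθᵢ, zᵢ ∈ {0,1}, θᵢ ≥ 0, achieving the same objective value; conversely, for any feasible (x̄, z̄, θ̄) of the latter problem, x̄ is feasible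 for the former and achieves an objective value no greater than that of (x̄, z̄, θ̄). Hence the two problems have equal optimal values. -/
open Finset

/-- Exactness of the mixed-integer second-order-cone reformulation:
feasible solutions correspond in both directions (with matching / no-greater objective
values), hence the optimal values of the two problems coincide. -/
theorem stmt_2 (m n : ℕ) (A : Matrix (Fin m) (Fin n) ℝ) (b : Fin m → ℝ)
    (ε γ : ℝ) (hε : 0 < ε) (hγ : 0 < γ)
    (w : Fin n → ℝ) (hw : ∀ i, 0 ≤ w i) :
    -- forward direction: from x̄ feasible for the ℓ₀ problem, (x̄, z̄, θ̄) is feasible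
    -- for the MISOC problem with equal objective value
    (∀ xb : Fin n → ℝ, (∑ j, (A.mulVec xb j - b j) ^ 2 ≤ ε) →
      ∃ zb θb : Fin n → ℝ,
        (∀ i, zb i = if xb i ≠ 0 then 1 else 0) ∧
        (∀ i, θb i = (xb i) ^ 2) ∧
        (∀ i, (xb i) ^ 2 ≤ zb i * θb i) ∧
        (∀ i, zb i = 0 ∨ zb i = 1) ∧
        (∀ i, 0 ≤ θb i) ∧
        (∑ i, zb i) + (1 / γ) * ∑ i, (w i) ^ 2 * θb i =
          ((Finset.univ.filter (fun i => xb i ≠ 0)).card : ℝ) +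
            (1 / γ) * ∑ i, (w i) ^ 2 * (xb i) ^ 2) ∧
    -- converse: any feasible (x̄, z̄, θ̄) of the MISOC yields x̄ feasible for the ℓ₀
    -- problem with objective no greater
    (∀ xb zb θb : Fin n → ℝ,
      (∑ j, (A.mulVec xb j - b j) ^ 2 ≤ ε) →
      (∀ i, (xb i) ^ 2 ≤ zb i * θb i) →
      (∀ i, zb i = 0 ∨ zb i = 1) →
      (∀ i, 0 ≤ θb i) →
      ((Finset.univ.filter (fun i => xb i ≠ 0)).card : ℝ) +
          (1 / γ) * ∑ i, (w i) ^ 2 * (xb i) ^ 2 ≤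
        (∑ i, zb i) + (1 / γ) * ∑ i, (w i) ^ 2 * θb i) ∧
    -- hence the optimal values are equal
    sInf {v : ℝ | ∃ x : Fin n → ℝ, (∑ j, (A.mulVec x j - b j) ^ 2 ≤ ε) ∧
        v = ((Finset.univ.filter (fun i => x i ≠ 0)).card : ℝ) +
          (1 / γ) * ∑ i, (w i) ^ 2 * (x i) ^ 2} =
      sInf {v : ℝ | ∃ x z θ : Fin n → ℝ,
        (∑ j, (A.mulVec x j - b j) ^ 2 ≤ ε) ∧
        (∀ i, (x i) ^ 2 ≤ z i * θ i) ∧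
        (∀ i, z i = 0 ∨ z i = 1) ∧
        (∀ i, 0 ≤ θ i) ∧
        v = (∑ i, z i) + (1 / γ) * ∑ i, (w i) ^ 2 * θ i} := by
  -- forward direction
  have fwd : ∀ xb : Fin n → ℝ, (∑ j, (A.mulVec xb j - b j) ^ 2 ≤ ε) →
      ∃ zb θb : Fin n → ℝ,
        (∀ i, zb i = if xb i ≠ 0 then 1 else 0) ∧
        (∀ i, θb i = (xb i) ^ 2) ∧
        (∀ i, (xb i) ^ 2 ≤ zb i * θb i) ∧
        (∀ i, zb i = 0 ∨ zb i = 1) ∧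
        (∀ i, 0 ≤ θb i) ∧
        (∑ i, zb i) + (1 / γ) * ∑ i, (w i) ^ 2 * θb i =
          ((Finset.univ.filter (fun i => xb i ≠ 0)).card : ℝ) +
            (1 / γ) * ∑ i, (w i) ^ 2 * (xb i) ^ 2 := by
    intro xb _
    refine ⟨fun i => if xb i ≠ 0 then 1 else 0, fun i => (xb i) ^ 2,
      fun i => rfl, fun i => rfl, ?_, ?_, fun i => sq_nonneg _, ?_⟩
    · intro i
      by_cases h : xb i = 0 <;> simp [h]
    · intro i
      by_cases h : xb i = 0 <;> simp [h]
    · congr 1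
      rw [Finset.sum_boole]
  -- converse direction
  have conv : ∀ xb zb θb : Fin n → ℝ,
      (∑ j, (A.mulVec xb j - b j) ^ 2 ≤ ε) →
      (∀ i, (xb i) ^ 2 ≤ zb i * θb i) →
      (∀ i, zb i = 0 ∨ zb i = 1) →
      (∀ i, 0 ≤ θb i) →
      ((Finset.univ.filter (fun i => xb i ≠ 0)).card : ℝ) +
          (1 / γ) * ∑ i, (w i) ^ 2 * (xb i) ^ 2 ≤
        (∑ i, zb i) + (1 / γ) * ∑ i, (w i) ^ 2 * θb i := by
    intro xb zb θb _ hcone hz hθ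
    have h1 : ((Finset.univ.filter (fun i => xb i ≠ 0)).card : ℝ) ≤ ∑ i, zb i := by
      rw [← Finset.sum_boole]
      apply Finset.sum_le_sum
      intro i _
      rcases hz i with h0 | h1
      · have := hcone i
        rw [h0, zero_mul] at this
        have hx0 : xb i = 0 := by
          have := le_antisymm this (sq_nonneg _)
          exact pow_eq_zero_iff (by norm_num) |>.mp this
        simp [hx0, h0]
      · by_cases h : xb i = 0 <;> simp [h, h1]
    have h2 : ∑ i, (w i) ^ 2 * (xb i) ^ 2 ≤ ∑ i, (w i) ^ 2 * θb i := by
      apply Finset.sum_le_sum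
      intro i _
      apply mul_le_mul_of_nonneg_left _ (sq_nonneg _)
      rcases hz i with h0 | h1
      · have := hcone i
        rw [h0, zero_mul] at this
        have : (xb i) ^ 2 = 0 := le_antisymm this (sq_nonneg _)
        rw [this]; exact hθ i
      · have := hcone i
        rwa [h1, one_mul] at this
    have hγ' : (0:ℝ) ≤ 1 / γ := by positivity
    gcongr
  refine ⟨fwd, conv, ?_⟩
  set S1 : Set ℝ := {v : ℝ | ∃ x : Fin n → ℝ, (∑ j, (A.mulVec x j - b j) ^ 2 ≤ ε) ∧
        v = ((Finset.univ.filter (fun i => x i ≠ 0)).card : ℝ) +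
          (1 / γ) * ∑ i, (w i) ^ 2 * (x i) ^ 2} with hS1
  set S2 : Set ℝ := {v : ℝ | ∃ x z θ : Fin n → ℝ,
        (∑ j, (A.mulVec x j - b j) ^ 2 ≤ ε) ∧
        (∀ i, (x i) ^ 2 ≤ z i * θ i) ∧
        (∀ i, z i = 0 ∨ z i = 1) ∧
        (∀ i, 0 ≤ θ i) ∧
        v = (∑ i, z i) + (1 / γ) * ∑ i, (w i) ^ 2 * θ i} with hS2
  -- from S1 to S2 with equal value
  have map12 : ∀ v ∈ S1, v ∈ S2 := by
    rintro v ⟨x, hx, rfl⟩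
    obtain ⟨z, θ, _, _, hc, hz, hθ, hobj⟩ := fwd x hx
    exact ⟨x, z, θ, hx, hc, hz, hθ, hobj.symm⟩
  -- from S2 to S1 with ≤ value
  have map21 : ∀ v ∈ S2, ∃ v' ∈ S1, v' ≤ v := by
    rintro v ⟨x, z, θ, hx, hc, hz, hθ, rfl⟩
    exact ⟨_, ⟨x, hx, rfl⟩, conv x z θ hx hc hz hθ⟩
  by_cases hne : S1.Nonempty
  · have hne2 : S2.Nonempty := ⟨_, map12 _ hne.choose_spec⟩
    have bdd1 : BddBelow S1 := by
      refine ⟨0, ?_⟩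
      rintro v ⟨x, _, rfl⟩
      have : (0:ℝ) ≤ (1 / γ) * ∑ i, (w i) ^ 2 * (x i) ^ 2 := by positivity
      positivity
    have bdd2 : BddBelow S2 := by
      refine ⟨0, ?_⟩
      rintro v ⟨x, z, θ, _, hc, hz, hθ, rfl⟩
      have hz' : (0:ℝ) ≤ ∑ i, z i := Finset.sum_nonneg fun i _ => by
        rcases hz i with h | h <;> simp [h]
      have hθ' : (0:ℝ) ≤ (1 / γ) * ∑ i, (w i) ^ 2 * θ i := by
        apply mul_nonneg (by positivity)
        exact Finset.sum_nonneg fun i _ => mul_nonneg (sq_nonneg _) (hθ i)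
      linarith
    apply le_antisymm
    · apply le_csInf hne2
      rintro v hv
      obtain ⟨v', hv', hle⟩ := map21 v hv
      exact (csInf_le bdd1 hv').trans hle
    · apply le_csInf hne
      intro v hv
      exact csInf_le bdd2 (map12 v hv)
  · have hne2 : ¬ S2.Nonempty := by
      rintro ⟨v, hv⟩
      obtain ⟨v', hv', -⟩ := map21 v hv
      exact hne ⟨v', hv'⟩
    rw [Set.not_nonempty_iff_eq_empty] at hne hne2
    rw [hne, hne2]
end
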